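/- Let W be a fully decomposable witness on the n-partite Hilbert space ℂ^{d_1}⊗⋯⊗ℂ^{d_n}, i.e., a Hermitian matrix such that for every nonempty strict subset M of {1,…,n} there exist positive semidefinite matrices P_M and Q_M with W = P_M + Q_M^{T_M}. Then tr(Wρ) ≥ 0 for every PPT mixture ρ. -/

import Mathlib

open Matrix Finset ComplexOrder

/-!
Write a PPT mixture as `ρ = ∑_M p_M ρ_M`. For each bipartition `M` decompose
`W = P_M + Q_M^{T_M}`; since the partial transpose is self-dual for the trace pairing,
`tr(W ρ_M) = tr(P_M ρ_M) + tr(Q_M ρ_M^{T_M})`, and both terms are traces of products of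
positive semidefinite matrices, hence nonnegative.
-/

/-- The space of linear operators on `ℂ^{d 0} ⊗ ⋯ ⊗ ℂ^{d (n-1)}`, with the tensor
product indexed by tuples `(i 0, …, i (n-1))`. -/
abbrev MatD {n : ℕ} (d : Fin n → ℕ) :=
  Matrix ((a : Fin n) → Fin (d a)) ((a : Fin n) → Fin (d a)) ℂ

/-- The partial transpose with respect to the subset `M` of tensor factors:
the row and column indices belonging to `M` are swapped. -/
def ptrans {n : ℕ} (d : Fin n → ℕ) (M : Finset (Fin n)) (X : MatD d) : MatD d :=
  fun i j => X (fun a => if a ∈ M then j a else i a) (fun a => if a ∈ M then i a else j a)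

/-- A state is a positive semidefinite matrix of trace 1. -/
def IsState {n : ℕ} {d : Fin n → ℕ} (ρ : MatD d) : Prop :=
  ρ.PosSemidef ∧ ρ.trace = 1

/-- The collection of nonempty strict subsets `M ⊊ {1,…,n}`, i.e. the bipartitions `M|M̄`. -/
def bipartitions (n : ℕ) : Finset (Finset (Fin n)) :=
  Finset.univ.filter (fun M : Finset (Fin n) => M.Nonempty ∧ M ≠ Finset.univ)

/-- A PPT mixture: a convex combination `ρ = Σ_M p_M ρ_M` over the nonempty strict
subsets `M`, where each `ρ_M` is a state whose partial transpose w.r.t. `M` is PSD. -/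
def IsPPTMixture {n : ℕ} (d : Fin n → ℕ) (ρ : MatD d) : Prop :=
  ∃ (p : Finset (Fin n) → ℝ) (σ : Finset (Fin n) → MatD d),
    (∀ M, 0 ≤ p M) ∧
    (∑ M ∈ bipartitions n, p M) = 1 ∧
    (∀ M ∈ bipartitions n, IsState (σ M) ∧ (ptrans d M (σ M)).PosSemidef) ∧
    ρ = ∑ M ∈ bipartitions n, (p M : ℂ) • σ M

lemma Matrix.PosSemidef.trace_mul_nonneg {m 𝕜 : Type*} [Fintype m] [RCLike 𝕜]
    {A B : Matrix m m 𝕜} (hA : A.PosSemidef) (hB : B.PosSemidef) : 0 ≤ (A * B).trace := by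
  classical
  obtain ⟨C, rfl⟩ : ∃ C : Matrix m m 𝕜, A = Cᴴ * C := by
    open scoped MatrixOrder in exact CStarAlgebra.nonneg_iff_eq_star_mul_self.mp hA.nonneg
  rw [Matrix.mul_assoc, trace_mul_comm]
  exact (hB.mul_mul_conjTranspose_same C).trace_nonneg

lemma Matrix.trace_mul_eq_sum_prod {m n R : Type*} [Fintype m] [Fintype n]
    [NonUnitalNonAssocSemiring R] (A : Matrix m n R) (B : Matrix n m R) :
    (A * B).trace = ∑ p : m × n, A p.1 p.2 * B p.2 p.1 := by
  simp only [trace, diag, mul_apply, Fintype.sum_prod_type]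

section PartialTranspose

variable {n : ℕ} (d : Fin n → ℕ) (M : Finset (Fin n))

def ptransIndex (p : ((a : Fin n) → Fin (d a)) × ((a : Fin n) → Fin (d a))) :
    ((a : Fin n) → Fin (d a)) × ((a : Fin n) → Fin (d a)) :=
  (fun a => if a ∈ M then p.2 a else p.1 a, fun a => if a ∈ M then p.1 a else p.2 a)

lemma ptransIndex_involutive : Function.Involutive (ptransIndex d M) := by
  intro p
  refine Prod.ext ?_ ?_ <;> funext a <;> by_cases h : a ∈ M <;> simp [ptransIndex, h]

lemma ptransIndex_swap (p : ((a : Fin n) → Fin (d a)) × ((a : Fin n) → Fin (d a))) :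
    ptransIndex d M p.swap = (ptransIndex d M p).swap :=
  rfl

lemma ptrans_apply_eq (X : MatD d) (p : ((a : Fin n) → Fin (d a)) × ((a : Fin n) → Fin (d a))) :
    ptrans d M X p.1 p.2 = X (ptransIndex d M p).1 (ptransIndex d M p).2 :=
  rfl

lemma trace_ptrans_mul (X Y : MatD d) :
    (ptrans d M X * Y).trace = (X * ptrans d M Y).trace := by
  rw [trace_mul_eq_sum_prod, trace_mul_eq_sum_prod]
  refine Fintype.sum_equiv (ptransIndex_involutive d M).toPerm _ _ fun p => ?_
  have hY : ptrans d M Y (ptransIndex d M p).2 (ptransIndex d M p).1 = Y p.2 p.1 := by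
    have h := ptrans_apply_eq d M Y (ptransIndex d M p).swap
    rwa [ptransIndex_swap, ptransIndex_involutive d M p] at h
  rw [Function.Involutive.coe_toPerm, hY, ptrans_apply_eq]

lemma trace_mul_nonneg_of_eq_add_ptrans {W P Q σ : MatD d} (hP : P.PosSemidef)
    (hQ : Q.PosSemidef) (hW : W = P + ptrans d M Q) (hσ : σ.PosSemidef)
    (hσM : (ptrans d M σ).PosSemidef) : 0 ≤ (W * σ).trace := by
  rw [hW, add_mul, trace_add, trace_ptrans_mul]
  exact add_nonneg (hP.trace_mul_nonneg hσ) (hQ.trace_mul_nonneg hσM)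

end PartialTranspose

theorem fully_decomposable_nonneg_on_PPT_mixtures
    {n : ℕ} (d : Fin n → ℕ) (W : MatD d)
    (hdec : ∀ M : Finset (Fin n), M.Nonempty → M ≠ Finset.univ →
      ∃ P Q : MatD d, P.PosSemidef ∧ Q.PosSemidef ∧ W = P + ptrans d M Q)
    (ρ : MatD d) (hρ : IsPPTMixture d ρ) :
    0 ≤ (W * ρ).trace := by
  obtain ⟨p, σ, hp, -, hσ, rfl⟩ := hρ
  rw [mul_sum, trace_sum]
  refine sum_nonneg fun M hM => ?_
  obtain ⟨⟨hσpsd, -⟩, hσM⟩ := hσ M hM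
  obtain ⟨hMne, hMuniv⟩ : M.Nonempty ∧ M ≠ univ := by simpa [bipartitions] using hM
  obtain ⟨P, Q, hP, hQ, hWeq⟩ := hdec M hMne hMuniv
  rw [Matrix.mul_smul, trace_smul, smul_eq_mul]
  exact mul_nonneg (by exact_mod_cast hp M)
    (trace_mul_nonneg_of_eq_add_ptrans d M hP hQ hWeq hσpsd hσM)
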